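/- On {(x,y) ∈ ℝ² : x > y} define L₋₁φ = x² ∂φ/∂x + y² ∂φ/∂y + (2/3)y·φ and L₋₂φ = x³ ∂φ/∂x + y³ ∂φ/∂y + y²·φ, and let Z(x,y) = (x−y)^{−1/3}. Then L₋₁ Z = −(1/3)(x−y)^{2/3} and L₋₁(L₋₁ Z) − (2/3) L₋₂ Z = 0. In particular, the SLE₆(ρ=−2) partition function Z generates a highest weight module of weight 0 whose grade-one singular vector is nonzero while its grade-two singular vector (L₋₁² − (2/3)L₋₂)Z vanishes, so this module is isomorphic to Q_{1,2} at c = 0. -/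
import Mathlib


noncomputable section

/-- `L₋₁` for SLE₆(ρ=-2) (with `h_x = 0`, `h_y = 1/3`) on functions of `(x,y)`. -/
def Lm1_15 (f : ℝ → ℝ → ℝ) (x y : ℝ) : ℝ :=
  x ^ 2 * deriv (fun x' => f x' y) x + y ^ 2 * deriv (fun y' => f x y') y
    + 2 / 3 * y * f x y

/-- `L₋₂` for SLE₆(ρ=-2) on functions of `(x,y)`. -/
def Lm2_15 (f : ℝ → ℝ → ℝ) (x y : ℝ) : ℝ :=
  x ^ 3 * deriv (fun x' => f x' y) x + y ^ 3 * deriv (fun y' => f x y') y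
    + y ^ 2 * f x y

/-- The SLE₆(ρ=-2) partition function `Z(x,y) = (x-y)^{-1/3}`. -/
def Z15 (x y : ℝ) : ℝ := (x - y) ^ (-(1 : ℝ) / 3)

end

lemma hdx15 (y x p : ℝ) (h : y < x) :
    HasDerivAt (fun x' : ℝ => (x' - y) ^ p) (p * (x - y) ^ (p - 1)) x := by
  have h0 : x - y ≠ 0 := (sub_pos.2 h).ne'
  have := ((hasDerivAt_id x).sub_const y).rpow_const (p := p) (Or.inl h0)
  simpa using this

lemma hdy15 (x y p : ℝ) (h : y < x) :
    HasDerivAt (fun y' : ℝ => (x - y') ^ p) (-p * (x - y) ^ (p - 1)) y := by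
  have h0 : x - y ≠ 0 := (sub_pos.2 h).ne'
  have := (((hasDerivAt_id y).const_sub x)).rpow_const (p := p) (Or.inl h0)
  simpa [mul_comm, neg_mul] using this

lemma part1_15 (x y : ℝ) (h : y < x) :
    Lm1_15 Z15 x y = -(1 / 3) * (x - y) ^ ((2 : ℝ) / 3) := by
  have ht : (0:ℝ) < x - y := sub_pos.2 h
  have A1 := (hdx15 y x (-(1:ℝ)/3) h).deriv
  have A2 := (hdy15 x y (-(1:ℝ)/3) h).deriv
  unfold Lm1_15 Z15
  rw [A1, A2]
  have h1 : (x - y) ^ (-(1:ℝ)/3) = (x - y) ^ (-(1:ℝ)/3 - 1) * (x - y) := by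
    rw [← Real.rpow_add_one ht.ne']; norm_num
  have h2 : (x - y) ^ ((2:ℝ)/3) = (x - y) ^ (-(1:ℝ)/3 - 1) * (x - y) ^ 2 := by
    rw [← Real.rpow_natCast (x - y) 2, ← Real.rpow_add ht]; norm_num
  rw [h1, h2]; ring

lemma dLx15 (x y : ℝ) (h : y < x) :
    deriv (fun x' => Lm1_15 Z15 x' y) x
      = -(1/3) * ((2:ℝ)/3 * (x - y) ^ ((2:ℝ)/3 - 1)) := by
  have hev : (fun x' => Lm1_15 Z15 x' y)
      =ᶠ[nhds x] (fun x' => -(1/3) * (x' - y) ^ ((2:ℝ)/3)) := by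
    filter_upwards [eventually_gt_nhds h] with x' hx' using part1_15 x' y hx'
  rw [hev.deriv_eq, ((hdx15 y x ((2:ℝ)/3) h).const_mul (-(1/3))).deriv]

lemma dLy15 (x y : ℝ) (h : y < x) :
    deriv (fun y' => Lm1_15 Z15 x y') y
      = -(1/3) * (-((2:ℝ)/3) * (x - y) ^ ((2:ℝ)/3 - 1)) := by
  have hev : (fun y' => Lm1_15 Z15 x y')
      =ᶠ[nhds y] (fun y' => -(1/3) * (x - y') ^ ((2:ℝ)/3)) := by
    filter_upwards [eventually_lt_nhds h] with y' hy' using part1_15 x y' hy'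
  rw [hev.deriv_eq, ((hdy15 x y ((2:ℝ)/3) h).const_mul (-(1/3))).deriv]

/-- `L₋₁ Z = -(1/3)(x-y)^{2/3}` is nonzero, while the grade-two
singular vector `(L₋₁² - (2/3)L₋₂) Z` vanishes. -/
theorem stmt_15 :
    ∀ x y : ℝ, y < x →
      (Lm1_15 Z15 x y = -(1 / 3) * (x - y) ^ ((2 : ℝ) / 3))
      ∧ (Lm1_15 (Lm1_15 Z15) x y - 2 / 3 * Lm2_15 Z15 x y = 0) := by
  intro x y h
  have ht : (0:ℝ) < x - y := sub_pos.2 h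
  refine ⟨part1_15 x y h, ?_⟩
  have B1 := (hdx15 y x (-(1:ℝ)/3) h).deriv
  have B2 := (hdy15 x y (-(1:ℝ)/3) h).deriv
  have outer : Lm1_15 (Lm1_15 Z15) x y
      = x ^ 2 * deriv (fun x' => Lm1_15 Z15 x' y) x
        + y ^ 2 * deriv (fun y' => Lm1_15 Z15 x y') y
        + 2 / 3 * y * Lm1_15 Z15 x y := rfl
  rw [outer, dLx15 x y h, dLy15 x y h, part1_15 x y h]
  unfold Lm2_15 Z15
  rw [B1, B2]
  have h1 : (x - y) ^ (-(1:ℝ)/3) = (x - y) ^ (-(1:ℝ)/3 - 1) * (x - y) := by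
    rw [← Real.rpow_add_one ht.ne']; norm_num
  have h2 : (x - y) ^ ((2:ℝ)/3) = (x - y) ^ (-(1:ℝ)/3 - 1) * (x - y) ^ 2 := by
    rw [← Real.rpow_natCast (x - y) 2, ← Real.rpow_add ht]; norm_num
  have h3 : (x - y) ^ ((2:ℝ)/3 - 1) = (x - y) ^ (-(1:ℝ)/3) := by norm_num
  rw [h3, h1, h2]; ring
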